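/- arXiv:1610.04530 — 3 statements merged into one kernel-verified Lean document; each statement's English description precedes it below -/
import Mathlib

section
/- Converse rate bound (abstract entropy form): let W, Q, and answer variables A_1, ..., A_N be finite-valued random variables, and M ≤ N. Suppose (i) W is independent of Q; (ii) H(W | A_1,...,A_N, Q) = 0; and (iii) for every M-element subset T ⊆ {1,...,N}, H(A_T | W, Q) ≥ H(A_T | Q), where A_T = (A_n)_{n∈T}. Then H(W) ≤ ((N-M)/N) · ∑_{n=1}^N H(A_n). -/
open BigOperators

noncomputable def pr {Ω α : Type*} [Fintype Ω] [DecidableEq α] (p : Ω → ℝ) (X : Ω → α) (a : α) : ℝ :=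
  ∑ ω, if X ω = a then p ω else 0

def IsProb {Ω : Type*} [Fintype Ω] (p : Ω → ℝ) : Prop :=
  (∀ ω, 0 ≤ p ω) ∧ ∑ ω, p ω = 1

noncomputable def ent {Ω α : Type*} [Fintype Ω] [Fintype α] [DecidableEq α] (p : Ω → ℝ) (X : Ω → α) : ℝ :=
  -∑ a, pr p X a * Real.log (pr p X a)

noncomputable def condEnt {Ω α β : Type*} [Fintype Ω] [Fintype α] [Fintype β] [DecidableEq α] [DecidableEq β]
    (p : Ω → ℝ) (X : Ω → α) (Y : Ω → β) : ℝ :=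
  ent p (fun ω => (X ω, Y ω)) - ent p Y

noncomputable def mi {Ω α β : Type*} [Fintype Ω] [Fintype α] [Fintype β] [DecidableEq α] [DecidableEq β]
    (p : Ω → ℝ) (X : Ω → α) (Y : Ω → β) : ℝ :=
  ent p X + ent p Y - ent p (fun ω => (X ω, Y ω))

noncomputable def condMI {Ω α β γ : Type*} [Fintype Ω] [Fintype α] [Fintype β] [Fintype γ]
    [DecidableEq α] [DecidableEq β] [DecidableEq γ]
    (p : Ω → ℝ) (X : Ω → α) (Y : Ω → β) (Z : Ω → γ) : ℝ :=
  condEnt p X Z + condEnt p Y Z - condEnt p (fun ω => (X ω, Y ω)) Z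

def IndepRV {Ω α β : Type*} [Fintype Ω] [DecidableEq α] [DecidableEq β]
    (p : Ω → ℝ) (X : Ω → α) (Y : Ω → β) : Prop :=
  ∀ a b, pr p (fun ω => (X ω, Y ω)) (a, b) = pr p X a * pr p Y b

open Finset

section L
variable {Ω α β : Type*} [Fintype Ω] [DecidableEq α] [DecidableEq β] {p : Ω → ℝ}

lemma pr_nonneg (hp : IsProb p) (X : Ω → α) (a : α) : 0 ≤ pr p X a :=
  Finset.sum_nonneg fun ω _ => by split <;> simp [hp.1 ω]

lemma sum_pr [Fintype α] (p : Ω → ℝ) (X : Ω → α) : ∑ a, pr p X a = ∑ ω, p ω := by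
  unfold pr; rw [Finset.sum_comm]; simp [Finset.sum_ite_eq]

lemma pr_le_one [Fintype α] (hp : IsProb p) (X : Ω → α) (a : α) : pr p X a ≤ 1 := by
  have h := sum_pr p X
  rw [hp.2] at h
  calc pr p X a ≤ ∑ b, pr p X b := Finset.single_le_sum (fun b _ => pr_nonneg hp X b) (mem_univ a)
  _ = 1 := h

lemma pr_comp (p : Ω → ℝ) (X : Ω → α) (f : α → β) [Fintype α] (b : β) :
    pr p (fun ω => f (X ω)) b = ∑ a ∈ univ.filter (fun a => f a = b), pr p X a := by
  unfold pr
  rw [Finset.sum_comm]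
  refine Finset.sum_congr rfl fun ω _ => ?_
  rw [Finset.sum_ite_eq]
  by_cases h : f (X ω) = b <;> simp [h]

lemma ent_nonneg [Fintype α] (hp : IsProb p) (X : Ω → α) : 0 ≤ ent p X := by
  unfold ent
  rw [neg_nonneg]
  refine Finset.sum_nonpos fun a _ => mul_nonpos_of_nonneg_of_nonpos (pr_nonneg hp X a)
    (Real.log_nonpos (pr_nonneg hp X a) (pr_le_one hp X a))

private lemma sum_mul_log_le {ι : Type*} (s : Finset ι) (r : ι → ℝ) (hr : ∀ i ∈ s, 0 ≤ r i) :
    ∑ i ∈ s, r i * Real.log (r i) ≤ (∑ i ∈ s, r i) * Real.log (∑ i ∈ s, r i) := by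
  rw [Finset.sum_mul]
  refine Finset.sum_le_sum fun i hi => ?_
  rcases eq_or_lt_of_le (hr i hi) with h | h
  · simp [← h]
  · exact mul_le_mul_of_nonneg_left
      (Real.log_le_log h (Finset.single_le_sum hr hi)) h.le

lemma ent_comp_le [Fintype α] [Fintype β] (hp : IsProb p) (X : Ω → α) (f : α → β) :
    ent p (fun ω => f (X ω)) ≤ ent p X := by
  unfold ent
  rw [neg_le_neg_iff]
  calc ∑ a, pr p X a * Real.log (pr p X a)
      = ∑ b, ∑ a ∈ univ.filter (fun a => f a = b), pr p X a * Real.log (pr p X a) :=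
        (Finset.sum_fiberwise univ f _).symm
    _ ≤ ∑ b, pr p (fun ω => f (X ω)) b * Real.log (pr p (fun ω => f (X ω)) b) := by
        refine Finset.sum_le_sum fun b _ => ?_
        rw [pr_comp p X f b]
        exact sum_mul_log_le _ _ fun a _ => pr_nonneg hp X a

lemma ent_comp_le' [Fintype α] [Fintype β] (hp : IsProb p) (X : Ω → α) (Y : Ω → β)
    (f : α → β) (h : ∀ ω, Y ω = f (X ω)) : ent p Y ≤ ent p X := by
  have : Y = fun ω => f (X ω) := funext h
  rw [this]; exact ent_comp_le hp X f

lemma nonempty_of_isProb (hp : IsProb p) : Nonempty Ω := by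
  by_contra h
  rw [not_nonempty_iff] at h
  have := hp.2
  simp [Finset.univ_eq_empty] at this

lemma ent_subsingleton [Fintype α] [Subsingleton α] (hp : IsProb p) (X : Ω → α) :
    ent p X = 0 := by
  have hΩ : Nonempty Ω := nonempty_of_isProb hp
  have hα : Nonempty α := ⟨X (Classical.arbitrary Ω)⟩
  have : Unique α := ⟨⟨Classical.arbitrary α⟩, fun a => Subsingleton.elim _ _⟩
  have h1 : pr p X default = 1 := by
    unfold pr
    rw [← hp.2]
    exact Finset.sum_congr rfl fun ω _ => by simp [Subsingleton.elim (X ω) default]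
  unfold ent
  rw [Fintype.sum_unique, h1]
  simp
end L
section L2
variable {Ω α β : Type*} [Fintype Ω] [DecidableEq α] [DecidableEq β] [Fintype α] [Fintype β] {p : Ω → ℝ}

lemma pr_fst (p : Ω → ℝ) (X : Ω → α) (Y : Ω → β) (a : α) :
    ∑ b, pr p (fun ω => (X ω, Y ω)) (a, b) = pr p X a := by
  unfold pr
  rw [Finset.sum_comm]
  refine Finset.sum_congr rfl fun ω _ => ?_
  by_cases h : X ω = a <;> simp [Prod.ext_iff, h, Finset.sum_ite_eq]

lemma pr_snd (p : Ω → ℝ) (X : Ω → α) (Y : Ω → β) (b : β) :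
    ∑ a, pr p (fun ω => (X ω, Y ω)) (a, b) = pr p Y b := by
  unfold pr
  rw [Finset.sum_comm]
  refine Finset.sum_congr rfl fun ω _ => ?_
  by_cases h : Y ω = b <;> simp [Prod.ext_iff, h, Finset.sum_ite_eq]

lemma ent_pair_le (hp : IsProb p) (X : Ω → α) (Y : Ω → β) :
    ent p (fun ω => (X ω, Y ω)) ≤ ent p X + ent p Y := by
  set r := pr p (fun ω => (X ω, Y ω)) with hrdef
  have hr0 : ∀ c, 0 ≤ r c := fun c => pr_nonneg hp _ c
  have hru : ∀ a b, r (a, b) ≤ pr p X a := fun a b => by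
    rw [← pr_fst p X Y a]
    exact Finset.single_le_sum (fun b' _ => hr0 (a, b')) (mem_univ b)
  have hrv : ∀ a b, r (a, b) ≤ pr p Y b := fun a b => by
    rw [← pr_snd p X Y b]
    exact Finset.single_le_sum (fun a' _ => hr0 (a', b)) (mem_univ a)
  -- key termwise inequality
  have key : ∀ c : α × β,
      r c * (Real.log (pr p X c.1) + Real.log (pr p Y c.2)) - r c * Real.log (r c)
        ≤ pr p X c.1 * pr p Y c.2 - r c := by
    rintro ⟨a, b⟩
    rcases eq_or_lt_of_le (hr0 (a, b)) with h | h
    · simp only [← h, zero_mul, sub_zero, mul_zero, sub_self]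
      exact mul_nonneg (pr_nonneg hp X a) (pr_nonneg hp Y b)
    · have hu : 0 < pr p X a := lt_of_lt_of_le h (hru a b)
      have hv : 0 < pr p Y b := lt_of_lt_of_le h (hrv a b)
      have hlog : Real.log (pr p X a) + Real.log (pr p Y b) - Real.log (r (a, b))
          = Real.log (pr p X a * pr p Y b / r (a, b)) := by
        rw [Real.log_div (by positivity) (ne_of_gt h), Real.log_mul (ne_of_gt hu) (ne_of_gt hv)]
      have hle : Real.log (pr p X a * pr p Y b / r (a, b))
          ≤ pr p X a * pr p Y b / r (a, b) - 1 :=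
        Real.log_le_sub_one_of_pos (by positivity)
      have := mul_le_mul_of_nonneg_left hle h.le
      calc r (a, b) * (Real.log (pr p X a) + Real.log (pr p Y b)) - r (a, b) * Real.log (r (a, b))
          = r (a, b) * (Real.log (pr p X a * pr p Y b / r (a, b))) := by rw [← hlog]; ring
        _ ≤ r (a, b) * (pr p X a * pr p Y b / r (a, b) - 1) := this
        _ = pr p X a * pr p Y b - r (a, b) := by field_simp
  have hsum : ∑ c : α × β, (r c * (Real.log (pr p X c.1) + Real.log (pr p Y c.2))
      - r c * Real.log (r c)) ≤ 0 := by
    calc ∑ c : α × β, (r c * (Real.log (pr p X c.1) + Real.log (pr p Y c.2)) - r c * Real.log (r c))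
        ≤ ∑ c : α × β, (pr p X c.1 * pr p Y c.2 - r c) := Finset.sum_le_sum fun c _ => key c
      _ = (∑ a, pr p X a) * (∑ b, pr p Y b) - ∑ c : α × β, r c := by
          rw [Finset.sum_sub_distrib, Fintype.sum_prod_type, Finset.sum_mul_sum]
      _ = 0 := by
          rw [sum_pr, sum_pr, hp.2, hrdef]
          have : ∑ c : α × β, pr p (fun ω => (X ω, Y ω)) c = 1 := by rw [sum_pr, hp.2]
          rw [this]; ring
  -- expand marginal identities inside hsum
  have hmargX : ∑ a, pr p X a * Real.log (pr p X a)
      = ∑ c : α × β, r c * Real.log (pr p X c.1) := by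
    rw [Fintype.sum_prod_type]
    refine Finset.sum_congr rfl fun a _ => ?_
    dsimp only
    rw [← Finset.sum_mul, pr_fst p X Y a]
  have hmargY : ∑ b, pr p Y b * Real.log (pr p Y b)
      = ∑ c : α × β, r c * Real.log (pr p Y c.2) := by
    rw [Fintype.sum_prod_type_right]
    refine Finset.sum_congr rfl fun b _ => ?_
    dsimp only
    rw [← Finset.sum_mul, pr_snd p X Y b]
  unfold ent
  rw [← hrdef]
  have expand : ∑ c : α × β, (r c * (Real.log (pr p X c.1) + Real.log (pr p Y c.2))
      - r c * Real.log (r c))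
      = (∑ c : α × β, r c * Real.log (pr p X c.1)) + (∑ c : α × β, r c * Real.log (pr p Y c.2))
        - ∑ c : α × β, r c * Real.log (r c) := by
    rw [Finset.sum_sub_distrib, ← Finset.sum_add_distrib]
    congr 1
    exact Finset.sum_congr rfl fun c _ => by ring
  rw [expand, ← hmargX, ← hmargY] at hsum
  linarith

lemma ent_pair_of_indep (hp : IsProb p) (X : Ω → α) (Y : Ω → β)
    (h : ∀ a b, pr p (fun ω => (X ω, Y ω)) (a, b) = pr p X a * pr p Y b) :
    ent p (fun ω => (X ω, Y ω)) = ent p X + ent p Y := by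
  unfold ent
  rw [Fintype.sum_prod_type]
  have : ∀ a b, pr p (fun ω => (X ω, Y ω)) (a, b) * Real.log (pr p (fun ω => (X ω, Y ω)) (a, b))
      = pr p X a * pr p Y b * Real.log (pr p X a)
        + pr p X a * pr p Y b * Real.log (pr p Y b) := by
    intro a b
    rw [h a b]
    by_cases hu : pr p X a = 0
    · simp [hu]
    · by_cases hv : pr p Y b = 0
      · simp [hv]
      · rw [Real.log_mul hu hv]; ring
  have h2 : ∑ a, ∑ b, pr p (fun ω => (X ω, Y ω)) (a, b)
        * Real.log (pr p (fun ω => (X ω, Y ω)) (a, b))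
      = (∑ a, pr p X a * Real.log (pr p X a)) * (∑ b, pr p Y b)
        + (∑ a, pr p X a) * (∑ b, pr p Y b * Real.log (pr p Y b)) := by
    rw [Finset.sum_mul_sum, Finset.sum_mul_sum, ← Finset.sum_add_distrib]
    refine Finset.sum_congr rfl fun a _ => ?_
    rw [← Finset.sum_add_distrib]
    refine Finset.sum_congr rfl fun b _ => ?_
    rw [this a b]; ring
  rw [h2, sum_pr, sum_pr, hp.2]
  ring
end L2
section L3
variable {Ω γ ι : Type*} [Fintype Ω] [Fintype γ] [DecidableEq γ] [Fintype ι] [DecidableEq ι]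
  {p : Ω → ℝ}

lemma ent_tuple_le_sum (hp : IsProb p) (A : ι → Ω → γ) (s : Finset ι) :
    ent p (fun ω => (fun i : s => A i ω)) ≤ ∑ n ∈ s, ent p (A n) := by
  classical
  induction s using Finset.induction_on with
  | empty =>
      rw [Finset.sum_empty]
      have : Subsingleton ((i : (∅ : Finset ι)) → γ) :=
        ⟨fun f g => funext fun i => absurd i.2 (Finset.notMem_empty _)⟩
      rw [ent_subsingleton hp _]
  | @insert j t hj ih =>
      have step1 : ent p (fun ω => (fun i : (insert j t : Finset ι) => A i ω))
          ≤ ent p (fun ω => (A j ω, (fun i : t => A i ω))) := by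
        refine ent_comp_le' hp _ _
          (fun z => fun i => if h : (i : ι) ∈ t then z.2 ⟨i, h⟩ else z.1) (fun ω => ?_)
        funext i
        dsimp only
        split
        · rfl
        · rcases Finset.mem_insert.mp i.2 with h | h
          · rw [h]
          · exact absurd h (by assumption)
      have step2 : ent p (fun ω => (A j ω, (fun i : t => A i ω)))
          ≤ ent p (A j) + ent p (fun ω => (fun i : t => A i ω)) :=
        ent_pair_le hp _ _
      rw [Finset.sum_insert hj]
      linarith [ih]
end L3
theorem spir_converse_rate' {Ω α β γ : Type*} [Fintype Ω] [Fintype α] [Fintype β]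
    [Fintype γ] [DecidableEq α] [DecidableEq β] [DecidableEq γ]
    (N M : ℕ) (hMN : M ≤ N) (p : Ω → ℝ) (hp : IsProb p)
    (W : Ω → α) (Q : Ω → β) (A : Fin N → Ω → γ)
    (hindep : ∀ a b, pr p (fun ω => (W ω, Q ω)) (a, b) = pr p W a * pr p Q b)
    (hdec : ent p (fun ω => (W ω, ((fun n : Fin N => A n ω), Q ω)))
      - ent p (fun ω => ((fun n : Fin N => A n ω), Q ω)) = 0)
    (hpriv : ∀ T : Finset (Fin N), T.card = M →
      ent p (fun ω => ((fun i : T => A i ω), Q ω)) - ent p Q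
        ≤ ent p (fun ω => ((fun i : T => A i ω), (W ω, Q ω))) - ent p (fun ω => (W ω, Q ω))) :
    ent p W ≤ (((N : ℝ) - M) / N) * ∑ n, ent p (A n) := by
  classical
  have key : ∀ T : Finset (Fin N), T.card = M → ent p W ≤ ∑ n ∈ Tᶜ, ent p (A n) := by
    intro T hT
    have hpriv' := hpriv T hT
    have h1 : ent p (fun ω => (W ω, Q ω)) = ent p W + ent p Q :=
      ent_pair_of_indep hp W Q hindep
    have h2 : ent p (fun ω => (W ω, ((fun n : Fin N => A n ω), Q ω)))
        = ent p (fun ω => ((fun n : Fin N => A n ω), Q ω)) := by linarith [hdec]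
    have h3 : ent p (fun ω => ((fun i : T => A i ω), (W ω, Q ω)))
        ≤ ent p (fun ω => (W ω, ((fun n : Fin N => A n ω), Q ω))) :=
      ent_comp_le' hp _ _
        (fun z => ((fun i : T => z.2.1 i), (z.1, z.2.2))) (fun ω => rfl)
    have h4 : ent p (fun ω => ((fun n : Fin N => A n ω), Q ω))
        ≤ ent p (fun ω => ((fun i : (Tᶜ : Finset (Fin N)) => A i ω),
            ((fun i : T => A i ω), Q ω))) := by
      refine ent_comp_le' hp _ _
        (fun z => ((fun n : Fin N => if h : n ∈ T then z.2.1 ⟨n, h⟩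
          else z.1 ⟨n, Finset.mem_compl.mpr h⟩), z.2.2)) (fun ω => ?_)
      dsimp only
      refine congrArg (fun v => (v, Q ω)) ?_
      funext n
      split <;> rfl
    have h5 : ent p (fun ω => ((fun i : (Tᶜ : Finset (Fin N)) => A i ω),
          ((fun i : T => A i ω), Q ω)))
        ≤ ent p (fun ω => (fun i : (Tᶜ : Finset (Fin N)) => A i ω))
          + ent p (fun ω => ((fun i : T => A i ω), Q ω)) := ent_pair_le hp _ _
    have h6 : ent p (fun ω => (fun i : (Tᶜ : Finset (Fin N)) => A i ω))
        ≤ ∑ n ∈ Tᶜ, ent p (A n) := ent_tuple_le_sum hp A Tᶜ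
    linarith
  rcases Nat.eq_zero_or_pos N with hN0 | hNpos
  · subst hN0
    have hM0 : M = 0 := Nat.le_zero.mp hMN
    have h := key ∅ (by simp [hM0])
    have he : ((∅ : Finset (Fin 0))ᶜ) = (∅ : Finset (Fin 0)) := Finset.eq_empty_of_isEmpty _
    rw [he, Finset.sum_empty] at h
    simpa [hM0] using h
  · have hcount : ∀ n : Fin N,
        ((Finset.powersetCard M (univ : Finset (Fin N))).filter (fun T => n ∉ T)).card
          = (N-1).choose M := by
      intro n
      have hfilter : ((Finset.powersetCard M (univ : Finset (Fin N))).filter (fun T => n ∉ T))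
          = Finset.powersetCard M ((univ : Finset (Fin N)).erase n) := by
        ext T
        simp only [Finset.mem_filter, Finset.mem_powersetCard, Finset.subset_erase]
        tauto
      rw [hfilter, Finset.card_powersetCard, Finset.card_erase_of_mem (Finset.mem_univ n),
        Finset.card_univ, Fintype.card_fin]
    have hTsum : ∑ T ∈ Finset.powersetCard M (univ : Finset (Fin N)), ∑ n ∈ Tᶜ, ent p (A n)
        = ((N-1).choose M : ℝ) * ∑ n, ent p (A n) := by
      have h1 : ∀ T : Finset (Fin N),
          ∑ n ∈ Tᶜ, ent p (A n) = ∑ n, if n ∉ T then ent p (A n) else 0 := by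
        intro T
        rw [← Finset.sum_filter]
        congr 1
        ext n
        simp
      calc ∑ T ∈ Finset.powersetCard M (univ : Finset (Fin N)), ∑ n ∈ Tᶜ, ent p (A n)
          = ∑ T ∈ Finset.powersetCard M (univ : Finset (Fin N)),
              ∑ n, if n ∉ T then ent p (A n) else 0 := Finset.sum_congr rfl fun T _ => h1 T
        _ = ∑ n, ∑ T ∈ Finset.powersetCard M (univ : Finset (Fin N)),
              if n ∉ T then ent p (A n) else 0 := Finset.sum_comm
        _ = ∑ n, ((N-1).choose M : ℝ) * ent p (A n) := by
            refine Finset.sum_congr rfl fun n _ => ?_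
            rw [← Finset.sum_filter, Finset.sum_const, nsmul_eq_mul, hcount n]
        _ = ((N-1).choose M : ℝ) * ∑ n, ent p (A n) := by rw [Finset.mul_sum]
    have hW : (N.choose M : ℝ) * ent p W ≤ ((N-1).choose M : ℝ) * ∑ n, ent p (A n) := by
      calc (N.choose M : ℝ) * ent p W
          = ∑ _T ∈ Finset.powersetCard M (univ : Finset (Fin N)), ent p W := by
            rw [Finset.sum_const, nsmul_eq_mul, Finset.card_powersetCard, Finset.card_univ,
              Fintype.card_fin]
        _ ≤ ∑ T ∈ Finset.powersetCard M (univ : Finset (Fin N)), ∑ n ∈ Tᶜ, ent p (A n) :=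
            Finset.sum_le_sum fun T hT => key T (Finset.mem_powersetCard.mp hT).2
        _ = _ := hTsum
    have hNid : N * (N-1).choose M = (N - M) * N.choose M := by
      have h1 : N.choose (M+1) * (M+1) = N.choose M * (N - M) := Nat.choose_succ_right_eq N M
      have h3 : (N - 1) + 1 = N := Nat.succ_pred_eq_of_pos hNpos
      have h2 := Nat.add_one_mul_choose_eq (N-1) M
      rw [h3] at h2
      rw [h2, h1, Nat.mul_comm]
    have hchoose_pos : 0 < (N.choose M : ℝ) := by exact_mod_cast Nat.choose_pos hMN
    have hNr : (0:ℝ) < N := by exact_mod_cast hNpos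
    have hcast : ((N:ℝ) - M) = ((N - M : ℕ) : ℝ) := by
      rw [Nat.cast_sub hMN]
    have hid : ((N:ℝ)) * ((N-1).choose M : ℝ) = ((N - M : ℕ):ℝ) * (N.choose M : ℝ) := by
      exact_mod_cast hNid
    rw [hcast, div_mul_eq_mul_div, le_div_iff₀ hNr]
    have h7 := mul_le_mul_of_nonneg_left hW hNr.le
    have h8 : (N:ℝ) * (((N-1).choose M : ℝ) * ∑ n, ent p (A n))
        = (N.choose M : ℝ) * (((N - M : ℕ):ℝ) * ∑ n, ent p (A n)) := by
      rw [← mul_assoc, hid]; ring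
    rw [h8] at h7
    have h9 : (N:ℝ) * ((N.choose M:ℝ) * ent p W) = (N.choose M:ℝ) * (ent p W * (N:ℝ)) := by
      ring
    rw [h9] at h7
    exact le_of_mul_le_mul_left h7 hchoose_pos

/-- Converse rate bound (abstract entropy form): if `W` is independent of `Q`, `W` is
decodable from all the answers together with `Q`, and for every `M`-element subset `T`
of the nodes `H(A_T | W, Q) ≥ H(A_T | Q)`, then
`H(W) ≤ ((N-M)/N) · ∑_n H(A_n)`. -/
theorem spir_converse_rate {Ω α β γ : Type*} [Fintype Ω] [Fintype α] [Fintype β]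
    [Fintype γ] [DecidableEq α] [DecidableEq β] [DecidableEq γ]
    (N M : ℕ) (hMN : M ≤ N) (p : Ω → ℝ) (hp : IsProb p)
    (W : Ω → α) (Q : Ω → β) (A : Fin N → Ω → γ)
    (hindep : IndepRV p W Q)
    (hdec : condEnt p W (fun ω => (fun n : Fin N => A n ω, Q ω)) = 0)
    (hpriv : ∀ T : Finset (Fin N), T.card = M →
      condEnt p (fun ω => fun i : T => A i ω) Q
        ≤ condEnt p (fun ω => fun i : T => A i ω) (fun ω => (W ω, Q ω))) :
    ent p W ≤ (((N : ℝ) - M) / N) * ∑ n, ent p (A n) := by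
  refine spir_converse_rate' N M hMN p hp W Q A hindep ?_ ?_
  · exact hdec
  · intro T hT
    exact hpriv T hT
end

section
/- Chain of inequalities in the secrecy converse: for finite-valued random variables W̄, A, Q, W, S with W̄ independent of (A, Q) (database privacy), W independent of W̄, H(W | A, Q) = 0 (decodability), and A a deterministic function of (Q, W, W̄, S), then H(A | Q, W) ≤ H(S). -/
open BigOperators

set_option linter.unusedSectionVars false
set_option maxHeartbeats 1000000

section aux
variable {Ω α β : Type*} [Fintype Ω] [Fintype α] [Fintype β] [DecidableEq α] [DecidableEq β]

lemma my_pr_nonneg (p : Ω → ℝ) (hp : ∀ ω, 0 ≤ p ω) (X : Ω → α) (a : α) : 0 ≤ pr p X a :=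
  Finset.sum_nonneg fun ω _ => by split <;> simp [hp ω]

lemma my_sum_pr (p : Ω → ℝ) (X : Ω → α) : ∑ a, pr p X a = ∑ ω, p ω := by
  unfold pr; rw [Finset.sum_comm]; simp

lemma my_pr_fst (p : Ω → ℝ) (X : Ω → α) (Y : Ω → β) (a : α) :
    pr p X a = ∑ b, pr p (fun ω => (X ω, Y ω)) (a, b) := by
  unfold pr; rw [Finset.sum_comm]
  refine Finset.sum_congr rfl fun ω _ => ?_
  by_cases h : X ω = a <;> simp [Prod.ext_iff, h, ite_and]

lemma my_pr_snd (p : Ω → ℝ) (X : Ω → α) (Y : Ω → β) (b : β) :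
    pr p Y b = ∑ a, pr p (fun ω => (X ω, Y ω)) (a, b) := by
  unfold pr; rw [Finset.sum_comm]
  refine Finset.sum_congr rfl fun ω _ => ?_
  by_cases h : Y ω = b <;> simp [Prod.ext_iff, h, ite_and]

lemma my_ent_eq (p : Ω → ℝ) (X : Ω → α) : ent p X = ∑ a, Real.negMulLog (pr p X a) := by
  unfold ent
  rw [← Finset.sum_neg_distrib]
  refine Finset.sum_congr rfl fun a _ => ?_
  simp [Real.negMulLog]

lemma my_ent_comp_inj (p : Ω → ℝ) (X : Ω → α) (g : α → β) (hg : Function.Injective g) :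
    ent p (fun ω => g (X ω)) = ent p X := by
  have h1 : ∀ a, pr p (fun ω => g (X ω)) (g a) = pr p X a := fun a => by
    unfold pr; simp [hg.eq_iff]
  have h2 : ∀ b, b ∉ Finset.univ.image g → pr p (fun ω => g (X ω)) b = 0 := by
    intro b hb
    refine Finset.sum_eq_zero fun ω _ => ?_
    have : g (X ω) ≠ b := fun h => hb (Finset.mem_image.2 ⟨X ω, Finset.mem_univ _, h⟩)
    simp [this]
  rw [my_ent_eq, my_ent_eq]
  rw [← Finset.sum_subset (Finset.subset_univ (Finset.univ.image g))
      (fun b _ hb => by rw [h2 b hb, Real.negMulLog_zero])]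
  rw [Finset.sum_image (fun x _ y _ h => hg h)]
  exact Finset.sum_congr rfl fun a _ => by rw [h1]


lemma my_ent_pair_ge_snd (p : Ω → ℝ) (hp : ∀ ω, 0 ≤ p ω) (X : Ω → α) (Y : Ω → β) :
    ent p Y ≤ ent p (fun ω => (X ω, Y ω)) := by
  set r : α × β → ℝ := pr p (fun ω => (X ω, Y ω)) with hr
  have hr0 : ∀ c, 0 ≤ r c := fun c => my_pr_nonneg p hp _ c
  have key : ∀ b : β, Real.negMulLog (pr p Y b) ≤ ∑ a, Real.negMulLog (r (a, b)) := by
    intro b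
    rw [my_pr_snd p X Y b]
    have hle : ∀ a, r (a, b) ≤ ∑ a', r (a', b) := fun a =>
      Finset.single_le_sum (fun a' _ => hr0 (a', b)) (Finset.mem_univ a)
    have : Real.negMulLog (∑ a, r (a, b)) = ∑ a, -(r (a, b) * Real.log (∑ a', r (a', b))) := by
      rw [Real.negMulLog, neg_mul, Finset.sum_mul, ← Finset.sum_neg_distrib]
    rw [this]
    refine Finset.sum_le_sum fun a _ => ?_
    rcases eq_or_lt_of_le (hr0 (a, b)) with h | h
    · simp [← h]
    · rw [Real.negMulLog, neg_mul, neg_le_neg_iff]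
      exact mul_le_mul_of_nonneg_left (Real.log_le_log h (hle a)) (hr0 (a,b))
  calc ent p Y = ∑ b, Real.negMulLog (pr p Y b) := my_ent_eq p Y
    _ ≤ ∑ b, ∑ a, Real.negMulLog (r (a, b)) := Finset.sum_le_sum fun b _ => key b
    _ = ∑ a, ∑ b, Real.negMulLog (r (a, b)) := Finset.sum_comm
    _ = ent p (fun ω => (X ω, Y ω)) := by rw [my_ent_eq, Fintype.sum_prod_type]

lemma my_ent_pair_comm (p : Ω → ℝ) (X : Ω → α) (Y : Ω → β) :
    ent p (fun ω => (X ω, Y ω)) = ent p (fun ω => (Y ω, X ω)) := by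
  have h := my_ent_comp_inj p (fun ω => (Y ω, X ω)) (fun x : β × α => (x.2, x.1))
    (fun x y h => by simpa [Prod.ext_iff, and_comm] using h)
  simpa using h

lemma my_ent_comp_le (p : Ω → ℝ) (hp : ∀ ω, 0 ≤ p ω) (X : Ω → α) (g : α → β) :
    ent p (fun ω => g (X ω)) ≤ ent p X := by
  have h1 := my_ent_pair_ge_snd p hp X (fun ω => g (X ω))
  have h2 : ent p (fun ω => (X ω, g (X ω))) = ent p X :=
    my_ent_comp_inj p X (fun a => (a, g a)) (fun x y h => (Prod.ext_iff.1 h).1)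
  linarith


lemma my_ent_pair_le (p : Ω → ℝ) (hp : IsProb p) (X : Ω → α) (Y : Ω → β) :
    ent p (fun ω => (X ω, Y ω)) ≤ ent p X + ent p Y := by
  set r : α × β → ℝ := pr p (fun ω => (X ω, Y ω)) with hrdef
  have hr0 : ∀ c, 0 ≤ r c := fun c => my_pr_nonneg p hp.1 _ c
  have hf0 : ∀ a, 0 ≤ pr p X a := my_pr_nonneg p hp.1 X
  have hg0 : ∀ b, 0 ≤ pr p Y b := my_pr_nonneg p hp.1 Y
  have hrf : ∀ c : α × β, r c ≤ pr p X c.1 := fun c => by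
    rw [my_pr_fst p X Y c.1]
    simpa using Finset.single_le_sum (fun b (_ : b ∈ Finset.univ) => hr0 (c.1, b))
      (Finset.mem_univ c.2)
  have hrg : ∀ c : α × β, r c ≤ pr p Y c.2 := fun c => by
    rw [my_pr_snd p X Y c.2]
    simpa using Finset.single_le_sum (fun a (_ : a ∈ Finset.univ) => hr0 (a, c.2))
      (Finset.mem_univ c.1)
  have hsr : ∑ c, r c = 1 := by rw [hrdef, my_sum_pr]; exact hp.2
  have hsf : ∑ a, pr p X a = 1 := by rw [my_sum_pr]; exact hp.2
  have hsg : ∑ b, pr p Y b = 1 := by rw [my_sum_pr]; exact hp.2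
  have hentX : ent p X = ∑ c : α × β, -(r c * Real.log (pr p X c.1)) := by
    rw [my_ent_eq, Fintype.sum_prod_type]
    refine Finset.sum_congr rfl fun a _ => ?_
    dsimp only
    rw [Real.negMulLog, neg_mul]
    rw [my_pr_fst p X Y a, Finset.sum_mul, ← Finset.sum_neg_distrib]
  have hentY : ent p Y = ∑ c : α × β, -(r c * Real.log (pr p Y c.2)) := by
    rw [my_ent_eq, Fintype.sum_prod_type, Finset.sum_comm]
    refine Finset.sum_congr rfl fun b _ => ?_
    dsimp only
    rw [Real.negMulLog, neg_mul]
    rw [my_pr_snd p X Y b, Finset.sum_mul, ← Finset.sum_neg_distrib]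
  have key : ∀ c : α × β, Real.negMulLog (r c) ≤
      -(r c * Real.log (pr p X c.1)) + -(r c * Real.log (pr p Y c.2))
        + (pr p X c.1 * pr p Y c.2 - r c) := by
    intro c
    rcases eq_or_lt_of_le (hr0 c) with h | h
    · rw [← h, Real.negMulLog_zero]
      have := mul_nonneg (hf0 c.1) (hg0 c.2)
      simp
      linarith
    · have hfc : 0 < pr p X c.1 := lt_of_lt_of_le h (hrf c)
      have hgc : 0 < pr p Y c.2 := lt_of_lt_of_le h (hrg c)
      have hlog : Real.log (pr p X c.1 * pr p Y c.2 / r c)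
          ≤ pr p X c.1 * pr p Y c.2 / r c - 1 :=
        Real.log_le_sub_one_of_pos (by positivity)
      rw [Real.log_div (by positivity) (ne_of_gt h),
        Real.log_mul (ne_of_gt hfc) (ne_of_gt hgc)] at hlog
      have h1 := mul_le_mul_of_nonneg_left hlog h.le
      have h2 : r c * (pr p X c.1 * pr p Y c.2 / r c - 1)
          = pr p X c.1 * pr p Y c.2 - r c := by field_simp
      rw [Real.negMulLog]
      nlinarith [h1, h2]
  have hprod : ∑ c : α × β, pr p X c.1 * pr p Y c.2 = 1 := by
    rw [Fintype.sum_prod_type]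
    rw [← Finset.sum_mul_sum]
    rw [hsf, hsg, one_mul]
  calc ent p (fun ω => (X ω, Y ω)) = ∑ c, Real.negMulLog (r c) := my_ent_eq p _
    _ ≤ ∑ c : α × β, (-(r c * Real.log (pr p X c.1)) + -(r c * Real.log (pr p Y c.2))
        + (pr p X c.1 * pr p Y c.2 - r c)) := Finset.sum_le_sum fun c _ => key c
    _ = (∑ c : α × β, -(r c * Real.log (pr p X c.1)))
        + (∑ c : α × β, -(r c * Real.log (pr p Y c.2)))
        + ((∑ c : α × β, pr p X c.1 * pr p Y c.2) - ∑ c, r c) := by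
          rw [Finset.sum_add_distrib, Finset.sum_add_distrib, Finset.sum_sub_distrib]
    _ = ent p X + ent p Y := by rw [← hentX, ← hentY, hprod, hsr]; ring

lemma my_ent_indep (p : Ω → ℝ) (hp : IsProb p) (X : Ω → α) (Y : Ω → β)
    (h : IndepRV p X Y) : ent p (fun ω => (X ω, Y ω)) = ent p X + ent p Y := by
  have hsf : ∑ a, pr p X a = 1 := by rw [my_sum_pr]; exact hp.2
  have hsg : ∑ b, pr p Y b = 1 := by rw [my_sum_pr]; exact hp.2
  have step : ∀ a, ∑ b, Real.negMulLog (pr p (fun ω => (X ω, Y ω)) (a, b))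
      = Real.negMulLog (pr p X a) + pr p X a * ∑ b, Real.negMulLog (pr p Y b) := by
    intro a
    simp_rw [h a, Real.negMulLog_mul]
    rw [Finset.sum_add_distrib, ← Finset.sum_mul, ← Finset.mul_sum, hsg, one_mul]
  rw [my_ent_eq, Fintype.sum_prod_type]
  simp_rw [step]
  rw [Finset.sum_add_distrib, ← Finset.sum_mul, hsf, one_mul, ← my_ent_eq, ← my_ent_eq]

end aux


/-- Core inequality in the secrecy converse: if the non-requested files `W̄` are
independent of `(A, Q)` (database privacy), `W` is independent of `W̄`, `W` is
decodable from `(A, Q)`, and `A` is a deterministic function of `(Q, W, W̄, S)`,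
then `H(A | Q, W) ≤ H(S)`. -/
theorem secrecy_core_inequality {Ω α β γ δ ε : Type*} [Fintype Ω]
    [Fintype α] [Fintype β] [Fintype γ] [Fintype δ] [Fintype ε]
    [DecidableEq α] [DecidableEq β] [DecidableEq γ] [DecidableEq δ] [DecidableEq ε]
    (p : Ω → ℝ) (hp : IsProb p)
    (Wbar : Ω → α) (A : Ω → β) (Q : Ω → γ) (W : Ω → δ) (S : Ω → ε)
    (hdbpriv : IndepRV p Wbar (fun ω => (A ω, Q ω)))
    (hWindep : IndepRV p W Wbar)
    (hdec : condEnt p W (fun ω => (A ω, Q ω)) = 0)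
    (f : γ × δ × α × ε → β) (hdet : ∀ ω, A ω = f (Q ω, W ω, Wbar ω, S ω)) :
    condEnt p A (fun ω => (Q ω, W ω)) ≤ ent p S := by
  have hp0 := hp.1
  -- Step A: relabel (A,(Q,W)) to (W,(A,Q)) and use decodability
  have hrel1 : ent p (fun ω => (A ω, (Q ω, W ω))) = ent p (fun ω => (W ω, (A ω, Q ω))) := by
    simpa using my_ent_comp_inj p (fun ω => (W ω, (A ω, Q ω)))
      (fun x : δ × β × γ => (x.2.1, (x.2.2, x.1)))
      (fun x y h => by simp only [Prod.ext_iff] at h ⊢; tauto)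
  have hdec' : ent p (fun ω => (W ω, (A ω, Q ω))) = ent p (fun ω => (A ω, Q ω)) := by
    have hd := hdec
    simp only [condEnt] at hd
    linarith
  have hA : ent p (fun ω => (A ω, (Q ω, W ω))) = ent p (fun ω => (A ω, Q ω)) := by
    rw [hrel1, hdec']
  -- B1: independence
  have hB1 : ent p (fun ω => (Wbar ω, (A ω, Q ω))) = ent p Wbar + ent p (fun ω => (A ω, Q ω)) :=
    my_ent_indep p hp Wbar (fun ω => (A ω, Q ω)) hdbpriv
  -- relabel: T = (A,(Q,(W,Wbar))) equals (W,(Wbar,(A,Q)))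
  have hT' : ent p (fun ω => (A ω, (Q ω, (W ω, Wbar ω))))
      = ent p (fun ω => (W ω, (Wbar ω, (A ω, Q ω)))) := by
    simpa using my_ent_comp_inj p (fun ω => (W ω, (Wbar ω, (A ω, Q ω))))
      (fun x : δ × α × β × γ => (x.2.2.1, (x.2.2.2, (x.1, x.2.1))))
      (fun x y h => by simp only [Prod.ext_iff] at h ⊢; tauto)
  have hmono : ent p (fun ω => (Wbar ω, (A ω, Q ω)))
      ≤ ent p (fun ω => (W ω, (Wbar ω, (A ω, Q ω)))) :=
    my_ent_pair_ge_snd p hp0 W (fun ω => (Wbar ω, (A ω, Q ω)))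
  -- relabel: T equals (Wbar,(A,(Q,W)))
  have hT'' : ent p (fun ω => (A ω, (Q ω, (W ω, Wbar ω))))
      = ent p (fun ω => (Wbar ω, (A ω, (Q ω, W ω)))) := by
    simpa using my_ent_comp_inj p (fun ω => (Wbar ω, (A ω, (Q ω, W ω))))
      (fun x : α × β × γ × δ => (x.2.1, (x.2.2.1, (x.2.2.2, x.1))))
      (fun x y h => by simp only [Prod.ext_iff] at h ⊢; tauto)
  have hsub1 : ent p (fun ω => (Wbar ω, (A ω, (Q ω, W ω))))
      ≤ ent p Wbar + ent p (fun ω => (A ω, (Q ω, W ω))) :=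
    my_ent_pair_le p hp Wbar (fun ω => (A ω, (Q ω, W ω)))
  have hTeq : ent p (fun ω => (A ω, (Q ω, (W ω, Wbar ω))))
      = ent p Wbar + ent p (fun ω => (A ω, Q ω)) := by
    have hle : ent p (fun ω => (A ω, (Q ω, (W ω, Wbar ω))))
        ≤ ent p Wbar + ent p (fun ω => (A ω, Q ω)) := by
      rw [hT'']
      calc ent p (fun ω => (Wbar ω, (A ω, (Q ω, W ω))))
          ≤ ent p Wbar + ent p (fun ω => (A ω, (Q ω, W ω))) := hsub1
        _ = ent p Wbar + ent p (fun ω => (A ω, Q ω)) := by rw [hA]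
    have hge : ent p Wbar + ent p (fun ω => (A ω, Q ω))
        ≤ ent p (fun ω => (A ω, (Q ω, (W ω, Wbar ω)))) := by
      rw [hT']
      linarith [hB1, hmono]
    linarith
  -- B3: data processing via determinism
  have hB3 : ent p (fun ω => (A ω, (Q ω, (W ω, Wbar ω))))
      ≤ ent p (fun ω => (Q ω, (W ω, (Wbar ω, S ω)))) := by
    have hfk : (fun ω => (A ω, (Q ω, (W ω, Wbar ω))))
        = fun ω => (fun x : γ × δ × α × ε =>
            (f (x.1, x.2.1, x.2.2.1, x.2.2.2), (x.1, (x.2.1, x.2.2.1))))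
          ((Q ω, (W ω, (Wbar ω, S ω)))) := funext fun ω => by simp [hdet ω]
    rw [hfk]
    exact my_ent_comp_le p hp0 (fun ω => (Q ω, (W ω, (Wbar ω, S ω))))
      (fun x : γ × δ × α × ε =>
        (f (x.1, x.2.1, x.2.2.1, x.2.2.2), (x.1, (x.2.1, x.2.2.1))))
  -- B4: pull out S
  have hrel4 : ent p (fun ω => (Q ω, (W ω, (Wbar ω, S ω))))
      = ent p (fun ω => ((Q ω, (W ω, Wbar ω)), S ω)) := by
    simpa using my_ent_comp_inj p (fun ω => ((Q ω, (W ω, Wbar ω)), S ω))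
      (fun x : (γ × δ × α) × ε => (x.1.1, (x.1.2.1, (x.1.2.2, x.2))))
      (fun x y h => by simp only [Prod.ext_iff] at h ⊢; tauto)
  have hB4 : ent p (fun ω => ((Q ω, (W ω, Wbar ω)), S ω))
      ≤ ent p (fun ω => (Q ω, (W ω, Wbar ω))) + ent p S :=
    my_ent_pair_le p hp (fun ω => (Q ω, (W ω, Wbar ω))) S
  -- B5
  have hrel5 : ent p (fun ω => (Q ω, (W ω, Wbar ω)))
      = ent p (fun ω => ((Q ω, W ω), Wbar ω)) := by
    simpa using my_ent_comp_inj p (fun ω => ((Q ω, W ω), Wbar ω))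
      (fun x : (γ × δ) × α => (x.1.1, (x.1.2, x.2)))
      (fun x y h => by simp only [Prod.ext_iff] at h ⊢; tauto)
  have hB5 : ent p (fun ω => ((Q ω, W ω), Wbar ω))
      ≤ ent p (fun ω => (Q ω, W ω)) + ent p Wbar :=
    my_ent_pair_le p hp (fun ω => (Q ω, W ω)) Wbar
  simp only [condEnt]
  linarith [hA, hTeq, hB3, hrel4, hB4, hrel5, hB5]
end

section
/- Solvability of the retrieval linear system: let q be a prime power and consider over F_q the linear system in NM unknowns consisting of M² unknowns X_{i,j} (i,j ∈ Fin M) and (N−M)M unknowns w (the file symbols), where the NM equations are: for each systematic node i and query index j, an equation of the form X_{i,j} + (0 or one file symbol w) = known value, and for each parity node and query index j, a fixed invertible linear combination of (X_{1,j},...,X_{M,j}) = known value. If the parity linear combinations LC^{M+1},...,LC^N together with the identity combinations form a matrix any M rows of which are invertible (MDS), and each file symbol appears in exactly one systematic equation, then the system has a unique solution. -/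
/-!
For a fixed query index `j` the masked inner products `X · j` form a message vector of the
systematic MDS code with generator rows `[I; L]`. The parity equations of a homogeneous solution
say that all `N - M` parity coordinates of its codeword vanish, and the systematic equations say
the same of the `M - (N - M)` systematic coordinates carrying no file symbol; these are `M` zero
coordinates, so the codeword and hence `X · j` vanish, and then every file symbol is read off its
own systematic equation. Thus the square linear system has trivial kernel, hence is bijective.
-/

open BigOperators

section

open Finset Matrix

variable {K : Type*} [Field K]

/-- `G` generates an MDS code whose coordinates index the rows of `G`: any `card n` rows of `G`
form an invertible matrix. -/
def Matrix.IsMDS {ι n : Type*} [Fintype n] [DecidableEq n] (G : Matrix ι n K) : Prop :=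
  ∀ s : n → ι, Function.Injective s → IsUnit (G.submatrix s id).det

theorem Matrix.IsMDS.eq_zero_of_card_le {ι n : Type*} [Fintype n] [DecidableEq n]
    {G : Matrix ι n K} (hG : G.IsMDS) {x : n → K} (S : Finset ι) (hS : Fintype.card n ≤ #S)
    (hx : ∀ a ∈ S, (G *ᵥ x) a = 0) : x = 0 := by
  obtain ⟨e⟩ := Function.Embedding.nonempty_of_card_le (hS.trans_eq (Fintype.card_coe S).symm)
  let s : n → ι := fun i => e i
  have hsub : G.submatrix s id *ᵥ x = 0 := funext fun i => hx _ (e i).2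
  exact eq_zero_of_mulVec_eq_zero (hG s (Subtype.val_injective.comp e.injective)).ne_zero hsub

theorem Matrix.IsMDS.eq_zero_of_fromRows {n p : Type*} [Fintype n] [Fintype p] [DecidableEq n]
    {L : Matrix p n K} (hG : (fromRows (1 : Matrix n n K) L).IsMDS) {φ : p → n}
    (hφ : Function.Injective φ) {x : n → K} (hx : ∀ i ∉ Set.range φ, x i = 0)
    (hL : L *ᵥ x = 0) : x = 0 := by
  classical
  refine hG.eq_zero_of_card_le ((univ.image φ)ᶜ.disjSum univ) ?_ ?_
  · have hpn : Fintype.card p ≤ Fintype.card n := Fintype.card_le_of_injective φ hφ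
    rw [card_disjSum, card_compl, card_image_of_injective _ hφ, card_univ]
    omega
  · rintro (i | r) ha
    · simpa [fromRows_mulVec] using hx i (by simpa using ha)
    · simp [fromRows_mulVec, hL]

variable {n p q : Type*} [Fintype n] [Fintype p] [DecidableEq n]

def retrievalMap (ψ : q → p → n) (L : p → n → K) :
    (n → q → K) × (p → q → K) →ₗ[K] (n → q → K) × (p → q → K) where
  toFun Xw := (fun i j => Xw.1 i j + ∑ r, if ψ j r = i then Xw.2 r j else 0,
    fun r j => ∑ i, L r i * Xw.1 i j)
  map_add' x y := by
    ext i j <;> simp [sum_add_distrib, mul_add, ite_add_zero, add_add_add_comm]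
  map_smul' c x := by
    ext i j <;> simp [mul_sum, mul_add, mul_left_comm]

theorem retrievalMap_eq_iff (ψ : q → p → n) (L : p → n → K) (Xw : (n → q → K) × (p → q → K))
    (b1 : n → q → K) (b2 : p → q → K) :
    retrievalMap ψ L Xw = (b1, b2) ↔
      (∀ i j, Xw.1 i j + (∑ r, if ψ j r = i then Xw.2 r j else 0) = b1 i j) ∧
        ∀ r j, ∑ i, L r i * Xw.1 i j = b2 r j := by
  simp [retrievalMap, Prod.ext_iff, funext_iff]

theorem retrievalMap_injective {ψ : q → p → n} (hψ : ∀ j, Function.Injective (ψ j))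
    {L : p → n → K} (hG : (fromRows (1 : Matrix n n K) (of L)).IsMDS) :
    Function.Injective (retrievalMap ψ L) := by
  refine (injective_iff_map_eq_zero _).mpr ?_
  rintro ⟨X, w⟩ h0
  obtain ⟨hsys, hpar⟩ := (retrievalMap_eq_iff ψ L (X, w) 0 0).mp h0
  have hX : X = 0 := by
    funext i j
    refine congrFun (hG.eq_zero_of_fromRows (hψ j) (x := fun i => X i j) ?_ ?_) i
    · rintro i hi
      simpa [show ∀ r, ψ j r ≠ i from fun r hr => hi ⟨r, hr⟩] using hsys i j
    · funext r
      simpa [mulVec, dotProduct] using hpar r j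
  have hw : w = 0 := by
    funext r j
    have h := hsys (ψ j r) j
    rw [sum_eq_single r (fun r' _ hr' => if_neg ((hψ j).ne hr')) (by simp), if_pos rfl] at h
    simpa [hX] using h
  simp [hX, hw]

end

theorem retrieval_system_unique_solution_general {Fq : Type*} [Field Fq] (N M : ℕ)
    (L : Fin (N - M) → Fin M → Fq)
    (hMDS : ∀ s : Fin M → (Fin M ⊕ Fin (N - M)), Function.Injective s →
      IsUnit (Matrix.of fun a b : Fin M =>
        Sum.elim (fun i : Fin M => fun b' : Fin M => if b' = i then (1 : Fq) else 0)
          L (s a) b).det)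
    (ψ : Fin M → Fin (N - M) → Fin M) (hψ : ∀ j, Function.Injective (ψ j))
    (b1 : Fin M → Fin M → Fq) (b2 : Fin (N - M) → Fin M → Fq) :
    ∃! Xw : (Fin M → Fin M → Fq) × (Fin (N - M) → Fin M → Fq),
      (∀ i j : Fin M,
          Xw.1 i j + (∑ r : Fin (N - M), if ψ j r = i then Xw.2 r j else 0) = b1 i j) ∧
        (∀ (r : Fin (N - M)) (j : Fin M), ∑ i, L r i * Xw.1 i j = b2 r j) := by
  have hG : (Matrix.fromRows (1 : Matrix (Fin M) (Fin M) Fq) (Matrix.of L)).IsMDS := by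
    have hrows : Matrix.fromRows (1 : Matrix (Fin M) (Fin M) Fq) (Matrix.of L) =
        Matrix.of fun a b => Sum.elim (fun i b' => if b' = i then (1 : Fq) else 0) L a b := by
      ext (i | r) b <;> simp [Matrix.one_apply, eq_comm]
    rw [hrows]
    exact hMDS
  have hinj := retrievalMap_injective hψ hG
  have hbij : Function.Bijective (retrievalMap ψ L) :=
    ⟨hinj, LinearMap.injective_iff_surjective.mp hinj⟩
  simpa only [retrievalMap_eq_iff] using hbij.existsUnique (b1, b2)

/-- Solvability of the retrieval linear system: over a finite field `Fq`, the `N·M`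
equations in the `M²` masked unknowns `X i j` and the `(N−M)·M` file symbols `w r j` —
where for each query index `j` each systematic equation reads
`X i j + (0 or one file symbol) = known`, each file symbol appears in exactly one
systematic equation (the assignment `ψ j` of file symbols to systematic nodes being
injective), and each parity equation is a linear combination `∑ i, L r i * X i j = known`
such that any `M` rows of the matrix formed by the identity rows and the parity rows
`L` are invertible (MDS) — has a unique solution. -/
theorem retrieval_system_unique_solution {Fq : Type*} [Field Fq] [Fintype Fq]
    [DecidableEq Fq] (N M : ℕ) (hM : 1 ≤ M) (hMN : M < N)
    (L : Fin (N - M) → Fin M → Fq)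
    (hMDS : ∀ s : Fin M → (Fin M ⊕ Fin (N - M)), Function.Injective s →
      IsUnit (Matrix.of fun a b : Fin M =>
        Sum.elim (fun i : Fin M => fun b' : Fin M => if b' = i then (1 : Fq) else 0)
          L (s a) b).det)
    (ψ : Fin M → Fin (N - M) → Fin M) (hψ : ∀ j, Function.Injective (ψ j))
    (b1 : Fin M → Fin M → Fq) (b2 : Fin (N - M) → Fin M → Fq) :
    ∃! Xw : (Fin M → Fin M → Fq) × (Fin (N - M) → Fin M → Fq),
      (∀ i j : Fin M,
          Xw.1 i j + (∑ r : Fin (N - M), if ψ j r = i then Xw.2 r j else 0) = b1 i j) ∧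
        (∀ (r : Fin (N - M)) (j : Fin M), ∑ i, L r i * Xw.1 i j = b2 r j) :=
  retrieval_system_unique_solution_general N M L hMDS ψ hψ b1 b2
end
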